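/- If Γ ⊢ Δ is an index sequent, then for every atom Add2(a,b,c) ∈ Γ its index is defined: either b !~_Γ b' holds for every Add1(a',b',c') ∈ Δ (index ⊥), or there is a unique integer d such that whenever s^n b ≡_Γ s^m b' for natural numbers n, m and some Add1(a',b',c') ∈ Δ, then m − n = d. -/

import Mathlib

namespace CLKID

/-- Terms of the language: variables, the constant `0`, and the unary function `s`. -/
inductive Tm : Type where
  | var : ℕ → Tm
  | zero : Tm
  | s : Tm → Tm
deriving DecidableEq

/-- `sIter n t` is the term `s^n t`. -/
def sIter : ℕ → Tm → Tm
  | 0, t => t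
  | n + 1, t => Tm.s (sIter n t)

/-- Substitution on terms. -/
def Tm.subst (θ : ℕ → Tm) : Tm → Tm
  | .var x => θ x
  | .zero => .zero
  | .s t => .s (t.subst θ)

/-- Free variables of a term. -/
def Tm.fv : Tm → Set ℕ
  | .var x => {x}
  | .zero => ∅
  | .s t => t.fv

/-- Subterms of a term. -/
def Tm.sub : Tm → Set Tm
  | .var x => {Tm.var x}
  | .zero => {Tm.zero}
  | .s t => insert (Tm.s t) t.sub

/-- The variable of a term (`none` if the term is of the form `s^n 0`). -/
def Tm.varOf : Tm → Option ℕ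
  | .var x => some x
  | .zero => none
  | .s t => t.varOf

/-- Formulas: equations, the two inductive-predicate atoms `Add1`/`Add2`,
    and the usual first-order connectives and quantifiers. -/
inductive Fm : Type where
  | eq : Tm → Tm → Fm
  | add1 : Tm → Tm → Tm → Fm
  | add2 : Tm → Tm → Tm → Fm
  | not : Fm → Fm
  | and : Fm → Fm → Fm
  | or : Fm → Fm → Fm
  | imp : Fm → Fm → Fm
  | all : ℕ → Fm → Fm
  | ex : ℕ → Fm → Fm
deriving DecidableEq

/-- Substitution on formulas. -/
def Fm.subst (θ : ℕ → Tm) : Fm → Fm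
  | .eq t u => .eq (t.subst θ) (u.subst θ)
  | .add1 a b c => .add1 (a.subst θ) (b.subst θ) (c.subst θ)
  | .add2 a b c => .add2 (a.subst θ) (b.subst θ) (c.subst θ)
  | .not φ => .not (φ.subst θ)
  | .and φ ψ => .and (φ.subst θ) (ψ.subst θ)
  | .or φ ψ => .or (φ.subst θ) (ψ.subst θ)
  | .imp φ ψ => .imp (φ.subst θ) (ψ.subst θ)
  | .all x φ => .all x (φ.subst (Function.update θ x (Tm.var x)))
  | .ex x φ => .ex x (φ.subst (Function.update θ x (Tm.var x)))

/-- Free variables of a formula. -/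
def Fm.fv : Fm → Set ℕ
  | .eq t u => t.fv ∪ u.fv
  | .add1 a b c => a.fv ∪ b.fv ∪ c.fv
  | .add2 a b c => a.fv ∪ b.fv ∪ c.fv
  | .not φ => φ.fv
  | .and φ ψ => φ.fv ∪ ψ.fv
  | .or φ ψ => φ.fv ∪ ψ.fv
  | .imp φ ψ => φ.fv ∪ ψ.fv
  | .all x φ => φ.fv \ {x}
  | .ex x φ => φ.fv \ {x}

/-- Terms occurring in a formula. -/
def Fm.tms : Fm → Set Tm
  | .eq t u => t.sub ∪ u.sub
  | .add1 a b c => a.sub ∪ b.sub ∪ c.sub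
  | .add2 a b c => a.sub ∪ b.sub ∪ c.sub
  | .not φ => φ.tms
  | .and φ ψ => φ.tms ∪ ψ.tms
  | .or φ ψ => φ.tms ∪ ψ.tms
  | .imp φ ψ => φ.tms ∪ ψ.tms
  | .all _ φ => φ.tms
  | .ex _ φ => φ.tms

/-- The substitution `[x := t]`. -/
def sub1 (x : ℕ) (t : Tm) : ℕ → Tm := fun y => if y = x then t else Tm.var y

/-- The simultaneous substitution `[v1 := t, v2 := u]`. -/
def sub2 (v1 v2 : ℕ) (t u : Tm) : ℕ → Tm :=
  fun z => if z = v1 then t else if z = v2 then u else Tm.var z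

/-- `≡_Γ`: the smallest congruence relation on terms containing all pairs `(t, u)`
    with the equation `t = u` in `Γ`. -/
inductive EqvTm (Γ : Set Fm) : Tm → Tm → Prop where
  | base {t u : Tm} : Fm.eq t u ∈ Γ → EqvTm Γ t u
  | refl (t : Tm) : EqvTm Γ t t
  | symm {t u : Tm} : EqvTm Γ t u → EqvTm Γ u t
  | trans {t u v : Tm} : EqvTm Γ t u → EqvTm Γ u v → EqvTm Γ t v
  | sCongr {t u : Tm} : EqvTm Γ t u → EqvTm Γ (Tm.s t) (Tm.s u)

/-- `t ~_Γ u` : `s^n t ≡_Γ s^m u` for some naturals `n`, `m`. -/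
def DepTm (Γ : Set Fm) (t u : Tm) : Prop := ∃ n m : ℕ, EqvTm Γ (sIter n t) (sIter m u)

/-- A sequent: a pair of finite sets of formulas. -/
structure Seq where
  ant : Finset Fm
  suc : Finset Fm

/-- The antecedent of a sequent, as a set of formulas. -/
def antSet (S : Seq) : Set Fm := ↑S.ant

/-- `[Γ]` from Lemma on chains: `{ s^n t1 = s^n t2 | t1 = t2 ∈ Γ or t2 = t1 ∈ Γ }`. -/
def brkt (Γ : Set Fm) : Set Fm :=
  {φ | ∃ (n : ℕ) (t1 t2 : Tm), φ = Fm.eq (sIter n t1) (sIter n t2) ∧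
        (Fm.eq t1 t2 ∈ Γ ∨ Fm.eq t2 t1 ∈ Γ)}

/-- `B1(Γ ⊢ Δ)` : second arguments of `Add1` atoms in the consequent. -/
def B1 (S : Seq) : Set Tm := {b | ∃ a c, Fm.add1 a b c ∈ S.suc}

/-- `C(Γ ⊢ Δ)` : third arguments of `Add2` atoms in the antecedent
    or `Add1` atoms in the consequent. -/
def Cset (S : Seq) : Set Tm :=
  {c | (∃ a b, Fm.add2 a b c ∈ S.ant) ∨ (∃ a b, Fm.add1 a b c ∈ S.suc)}

/-- Index sequent. -/
def IndexSequent (S : Seq) : Prop :=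
  (∀ t ∈ B1 S, ∀ u ∈ Cset S, ¬ DepTm (antSet S) t u) ∧
  (∀ b ∈ B1 S, ∀ b' ∈ B1 S, ∀ n m : ℕ, EqvTm (antSet S) (sIter n b) (sIter m b') → n = m)


/-!
Two witnesses `s^n₀ b ≡_Γ s^m₀ b₀` and `s^n b ≡_Γ s^m b'`, shifted by `s^n` and `s^n₀` respectively,
chain to `s^(n + m₀) b₀ ≡_Γ s^(n₀ + m) b'`. Condition (ii) of an index sequent then forces
`n + m₀ = n₀ + m`, i.e. every witness has the same offset `m - n`.
-/

theorem sIter_add (k n : ℕ) (t : Tm) : sIter (k + n) t = sIter k (sIter n t) := by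
  induction k with
  | zero => rw [Nat.zero_add]; rfl
  | succ k ih => rw [Nat.succ_add, sIter, ih, sIter]

theorem EqvTm.sIter_congr {Γ : Set Fm} {t u : Tm} (k : ℕ) (h : EqvTm Γ t u) :
    EqvTm Γ (sIter k t) (sIter k u) := by
  induction k with
  | zero => exact h
  | succ k ih => exact ih.sCongr

theorem EqvTm.sIter_cross {Γ : Set Fm} {b b₀ b' : Tm} {n₀ m₀ n m : ℕ}
    (h₀ : EqvTm Γ (sIter n₀ b) (sIter m₀ b₀)) (h : EqvTm Γ (sIter n b) (sIter m b')) :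
    EqvTm Γ (sIter (n + m₀) b₀) (sIter (n₀ + m) b') := by
  have h₀' : EqvTm Γ (sIter (n + n₀) b) (sIter (n + m₀) b₀) := by
    rw [sIter_add, sIter_add]; exact h₀.sIter_congr n
  have h' : EqvTm Γ (sIter (n + n₀) b) (sIter (n₀ + m) b') := by
    rw [Nat.add_comm n n₀, sIter_add, sIter_add]; exact h.sIter_congr n₀
  exact h₀'.symm.trans h'

theorem IndexSequent.offset_eq {S : Seq} (hS : IndexSequent S) {b b₀ b' : Tm}
    (hb₀ : b₀ ∈ B1 S) (hb' : b' ∈ B1 S) {n₀ m₀ n m : ℕ}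
    (h₀ : EqvTm (antSet S) (sIter n₀ b) (sIter m₀ b₀))
    (h : EqvTm (antSet S) (sIter n b) (sIter m b')) :
    (m : ℤ) - n = m₀ - n₀ := by
  have := hS.2 b₀ hb₀ b' hb' _ _ (h₀.sIter_cross h)
  omega

theorem index_defined_general (S : Seq) (hS : IndexSequent S) (b : Tm) :
    (∀ a' b' c', Fm.add1 a' b' c' ∈ S.suc → ¬ DepTm (antSet S) b b') ∨
    (∃! d : ℤ, ∀ (n m : ℕ) (a' b' c' : Tm), Fm.add1 a' b' c' ∈ S.suc →
        EqvTm (antSet S) (sIter n b) (sIter m b') → (m : ℤ) - (n : ℤ) = d) := by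
  by_cases hbot : ∀ a' b' c', Fm.add1 a' b' c' ∈ S.suc → ¬ DepTm (antSet S) b b'
  · exact Or.inl hbot
  push Not at hbot
  obtain ⟨a₀, b₀, c₀, hmem₀, n₀, m₀, h₀⟩ := hbot
  refine Or.inr ⟨(m₀ : ℤ) - n₀, fun n m a' b' c' hmem h => ?_, fun d hd => ?_⟩
  · exact hS.offset_eq ⟨a₀, c₀, hmem₀⟩ ⟨a', c', hmem⟩ h₀ h
  · exact (hd n₀ m₀ a₀ b₀ c₀ hmem₀ h₀).symm

/-- In an index sequent, the index of every `Add2` atom of the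
    antecedent is defined: either it is `⊥`, or there is a unique integer `d`
    with `m - n = d` whenever `s^n b ≡_Γ s^m b'` for some `Add1(a',b',c') ∈ Δ`. -/
theorem index_defined (S : Seq) (hS : IndexSequent S) (a b c : Tm)
    (h : Fm.add2 a b c ∈ S.ant) :
    (∀ a' b' c', Fm.add1 a' b' c' ∈ S.suc → ¬ DepTm (antSet S) b b') ∨
    (∃! d : ℤ, ∀ (n m : ℕ) (a' b' c' : Tm), Fm.add1 a' b' c' ∈ S.suc →
        EqvTm (antSet S) (sIter n b) (sIter m b') → (m : ℤ) - (n : ℤ) = d) :=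
  index_defined_general S hS b

end CLKID
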